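/- Let X be a commutative topological free algebra over K (K = ℝ or ℂ) that is α-generated free (it has a set of free generators A with |A| = α and X = ⟨A⟩), where α is infinite and w(X) ≤ α. Then there is a family {Y_κ}_{κ<α} of subalgebras of X such that: (1) each Y_κ is an α-generated free dense subalgebra of X; and (2) the family {Y_κ}_{κ<α} is algebraically independent (in particular Y_{κ₁} ∩ Y_{κ₂} = {0} whenever κ₁ ≠ κ₂). -/

import Mathlib

/-!
A set of free generators of `X` is the same thing as an algebraically independent subset of the
unitization of `X` (a polynomial with nonzero constant term cannot vanish there), so the
statement is about algebraic independence and transcendence.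

Let `V_β` (`β ∈ A`) run through the nonempty sets of a basis of cardinality at most `α`, and
well-order `A × A` in order type `|A|`, so that proper initial segments have fewer than `|A|`
elements. For each `g = (κ, β)` pick `p_g ∈ V_β`, a polynomial in a finite set `T_g ⊆ A`, and
a generator `a_g ∈ A` lying in no `T_g'` with `g' ≤ g`; then perturb to
`f_g = p_g + c_g a_g ∈ V_β` with `c_g ≠ 0`. The substitution `a_g ↦ f_g` is triangular: `p_g`
and every `f_g'` with `g' < g` lie in the algebra generated by `A \ {a_g}`, over which `a_g`,
hence `f_g`, is transcendental. So `f` is algebraically independent, and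
`F_κ = {f_(κ,β) | β ∈ A}` works.
-/

universe u

open Cardinal

/-- The weight of a topological space: the smallest cardinality of a basis for its topology. -/
noncomputable def tsWeight (X : Type u) [TopologicalSpace X] : Cardinal.{u} :=
  sInf { c : Cardinal.{u} | ∃ B : Set (Set X),
    TopologicalSpace.IsTopologicalBasis B ∧ #↥B = c }

variable (𝕜 : Type) [RCLike 𝕜] {X : Type} [NonUnitalCommRing X] [Module 𝕜 X]
  [SMulCommClass 𝕜 X X] [IsScalarTower 𝕜 X X]

/-- `S` is a set of free generators (SFG): for every `n`, every nonzero polynomial `P` in `n`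
variables with no constant term and all pairwise distinct `x₁, …, x_n ∈ S` one has
`P(x₁, …, x_n) ≠ 0`.  (The evaluation of a polynomial with no constant term at elements of the
non-unital algebra `X` is performed inside the unitization of `X`, where it lands in the copy
of `X`.) -/
def IsSFG (S : Set X) : Prop :=
  ∀ (n : ℕ) (x : Fin n → X), (∀ i, x i ∈ S) → Function.Injective x →
    ∀ P : MvPolynomial (Fin n) 𝕜, P ≠ 0 → MvPolynomial.constantCoeff P = 0 →
      MvPolynomial.aeval (fun i => (x i : Unitization 𝕜 X)) P ≠ 0

open MvPolynomial Function Set Topology TopologicalSpace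
open scoped Ordinal

theorem Transcendental.smul_add_of_mem {K A : Type*} [Field K] [CommRing A] [Algebra K A]
    {S : Subalgebra K A} {z : A} (hz : Transcendental S z) {c : K} (hc : c ≠ 0) {y : A}
    (hy : y ∈ S) : Transcendental S (c • z + y) := by
  nontriviality S
  have hc' : algebraMap K S c ≠ 0 := (map_ne_zero _).2 hc
  have := hz.aeval (Polynomial.C (algebraMap K S c) * Polynomial.X + Polynomial.C ⟨y, hy⟩)
    (by rw [Polynomial.natDegree_linear hc']; exact one_ne_zero)
    (by rw [Polynomial.leadingCoeff_linear hc']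
        exact ((IsUnit.mk0 c hc).map (algebraMap K S)).mem_nonZeroDivisors)
  rwa [map_add, map_mul, Polynomial.aeval_C, Polynomial.aeval_C, Polynomial.aeval_X,
    ← IsScalarTower.algebraMap_apply, ← Algebra.smul_def] at this

theorem AlgebraicIndepOn.algebraicIndependent_smul_add {K A ι γ : Type*} [Field K] [CommRing A]
    [Algebra K A] [LinearOrder γ] {x : ι → A} {s : Set ι} (hx : AlgebraicIndepOn K x s)
    {a : γ → ι} (has : ∀ g, a g ∈ s) (ha : Injective a) {c : γ → K} (hc : ∀ g, c g ≠ 0)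
    {y : γ → A} (hy : ∀ g, y g ∈ Algebra.adjoin K (x '' (s \ a '' Ici g))) :
    AlgebraicIndependent K fun g => c g • x (a g) + y g := by
  set f := fun g => c g • x (a g) + y g
  refine algebraicIndependent_of_finite_type fun u hu => ?_
  obtain ⟨u, rfl⟩ := hu.exists_finset_coe
  clear hu
  induction u using Finset.induction_on_max with
  | empty =>
    rw [Finset.coe_empty]
    exact algebraicIndependent_empty_type_iff.2 hx.algebraMap_injective
  | insert g u hlt ih =>
    rw [Finset.coe_insert]
    refine AlgebraicIndepOn.insert ih ?_
    have hxg : Transcendental (Algebra.adjoin K (x '' (s \ {a g}))) (x (a g)) := by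
      have := hx.mono (insert_subset (has g) (sdiff_subset (t := {a g})))
      exact ((AlgebraicIndepOn.insert_iff (by simp)).1 this).2
    have hle : ∀ g' ≤ g, Algebra.adjoin K (x '' (s \ a '' Ici g')) ≤
        Algebra.adjoin K (x '' (s \ {a g})) := fun g' hg' =>
      Algebra.adjoin_mono (image_mono (sdiff_subset_sdiff_right
        (singleton_subset_iff.2 ⟨g, hg', rfl⟩)))
    refine (hxg.smul_add_of_mem (hc g) (hle g le_rfl (hy g))).of_tower_top_of_subalgebra_le ?_
    refine Algebra.adjoin_le ?_
    rintro _ ⟨g', hg', rfl⟩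
    refine add_mem (Subalgebra.smul_mem _ (Algebra.subset_adjoin ?_) _)
      (hle g' (hlt g' hg').le (hy g'))
    exact mem_image_of_mem x ⟨has g', fun h => (hlt g' hg').ne (ha h)⟩

theorem AlgebraicIndependent.disjoint_adjoin_image {R A ι : Type*} [CommRing R] [CommRing A]
    [Algebra R A] {x : ι → A} (hx : AlgebraicIndependent R x) {s t : Set ι}
    (hst : Disjoint s t) :
    Disjoint (Algebra.adjoin R (x '' s)) (Algebra.adjoin R (x '' t)) := by
  have adjoin_eq : ∀ u : Set ι, Algebra.adjoin R (x '' u) = (supported R u).map (aeval x) := by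
    intro u
    rw [supported_eq_adjoin_X, AlgHom.map_adjoin, Set.image_image]
    simp only [aeval_X]
  rw [disjoint_iff, eq_bot_iff]
  rintro z ⟨hzs, hzt⟩
  rw [SetLike.mem_coe, adjoin_eq, Subalgebra.mem_map] at hzs hzt
  obtain ⟨p, hps, rfl⟩ := hzs
  obtain ⟨q, hqt, hqp⟩ := hzt
  obtain rfl : q = p := hx hqp
  have hq : q ∈ supported R (∅ : Set ι) := by
    rw [mem_supported] at hps hqt ⊢
    exact fun i hi => (Set.disjoint_left.1 hst (hps hi) (hqt hi)).elim
  rw [supported_empty, Algebra.mem_bot] at hq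
  obtain ⟨c, rfl⟩ := hq
  rw [AlgHom.commutes]
  exact Subalgebra.algebraMap_mem _ c

theorem NonUnitalAlgebra.exists_finite_subset_mem_adjoin {R A : Type*} [CommSemiring R]
    [NonUnitalNonAssocSemiring A] [Module R A] [IsScalarTower R A A] [SMulCommClass R A A]
    {s : Set A} {z : A} (hz : z ∈ NonUnitalAlgebra.adjoin R s) :
    ∃ t ⊆ s, t.Finite ∧ z ∈ NonUnitalAlgebra.adjoin R t := by
  induction hz using NonUnitalAlgebra.adjoin_induction with
  | mem z hz => exact ⟨{z}, singleton_subset_iff.2 hz, finite_singleton z, subset_adjoin R rfl⟩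
  | zero => exact ⟨∅, empty_subset s, finite_empty, zero_mem _⟩
  | add z w _ _ ihz ihw =>
    obtain ⟨t, hts, ht, hzt⟩ := ihz
    obtain ⟨t', hts', ht', hwt'⟩ := ihw
    exact ⟨t ∪ t', union_subset hts hts', ht.union ht',
      add_mem (adjoin_mono subset_union_left hzt) (adjoin_mono subset_union_right hwt')⟩
  | mul z w _ _ ihz ihw =>
    obtain ⟨t, hts, ht, hzt⟩ := ihz
    obtain ⟨t', hts', ht', hwt'⟩ := ihw
    exact ⟨t ∪ t', union_subset hts hts', ht.union ht',
      mul_mem (adjoin_mono subset_union_left hzt) (adjoin_mono subset_union_right hwt')⟩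
  | smul r z _ ih =>
    obtain ⟨t, hts, ht, hzt⟩ := ih
    exact ⟨t, hts, ht, SMulMemClass.smul_mem r hzt⟩

theorem Unitization.inr_mem_adjoin_image {R A : Type*} [CommSemiring R] [NonUnitalSemiring A]
    [Module R A] [IsScalarTower R A A] [SMulCommClass R A A] {s : Set A} {z : A}
    (hz : z ∈ NonUnitalAlgebra.adjoin R s) :
    (z : Unitization R A) ∈ Algebra.adjoin R ((↑) '' s : Set (Unitization R A)) := by
  induction hz using NonUnitalAlgebra.adjoin_induction with
  | mem z hz => exact Algebra.subset_adjoin (mem_image_of_mem _ hz)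
  | zero => rw [Unitization.inr_zero]; exact zero_mem _
  | add z w _ _ ihz ihw => rw [Unitization.inr_add]; exact add_mem ihz ihw
  | mul z w _ _ ihz ihw => rw [Unitization.inr_mul]; exact mul_mem ihz ihw
  | smul r z _ ih => rw [Unitization.inr_smul]; exact Subalgebra.smul_mem _ ih r

theorem Unitization.fst_aeval_inr {R A σ : Type*} [CommSemiring R] [NonUnitalCommSemiring A]
    [Module R A] [IsScalarTower R A A] [SMulCommClass R A A] (x : σ → A)
    (p : MvPolynomial σ R) :
    (aeval (fun i => (x i : Unitization R A)) p).fst = constantCoeff p := by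
  rw [← Unitization.fstHom_apply, comp_aeval_apply]
  simp

theorem exists_ne_zero_add_smul_mem {𝕜 E : Type*} [NontriviallyNormedField 𝕜]
    [TopologicalSpace E] [AddCommMonoid E] [Module 𝕜 E] [ContinuousAdd E] [ContinuousSMul 𝕜 E]
    {U : Set E} (hU : IsOpen U) {x : E} (hx : x ∈ U) (a : E) :
    ∃ c : 𝕜, c ≠ 0 ∧ x + c • a ∈ U := by
  have hcont : Continuous fun c : 𝕜 => x + c • a := by fun_prop
  have : ∀ᶠ c in 𝓝[≠] (0 : 𝕜), x + c • a ∈ U :=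
    eventually_nhdsWithin_of_eventually_nhds <|
      hcont.continuousAt.preimage_mem_nhds (by simpa using hU.mem_nhds hx)
  exact (this.and self_mem_nhdsWithin).exists.imp fun c hc => ⟨hc.2, hc.1⟩

theorem Cardinal.mk_biUnion_lt_of_finite {ι Z : Type u} {c : Cardinal.{u}} (hc : ℵ₀ ≤ c)
    {s : Set ι} (hs : #s < c) {T : ι → Set Z} (hT : ∀ i, (T i).Finite) :
    #(⋃ i ∈ s, T i) < c := by
  by_cases hsf : s.Finite
  · exact (lt_aleph0_iff_set_finite.2 (hsf.biUnion fun i _ => hT i)).trans_le hc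
  · have : Infinite s := infinite_coe_iff.2 hsf
    calc #(⋃ i ∈ s, T i) ≤ #s * ⨆ i : s, #(T i) := mk_biUnion_le T s
      _ ≤ #s * ℵ₀ := by gcongr; exact ciSup_le' fun i => (hT i).lt_aleph0.le
      _ = #s := mul_aleph0_eq (aleph0_le_mk s)
      _ < c := hs

theorem exists_injective_forall_mem_notMem {γ Z : Type u} {A : Set Z} (hA : ℵ₀ ≤ #A)
    (hγ : #γ ≤ #A) (B : γ → Set Z) (hB : ∀ g, #(B g) < #A) :
    ∃ a : γ → Z, Injective a ∧ ∀ g, a g ∈ A ∧ a g ∉ B g := by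
  -- `a g` is taken from the `g`-th row of `e`, so `a` is injective for free.
  obtain ⟨e⟩ : Nonempty (γ × A ↪ A) := by
    rw [← Cardinal.le_def, mk_prod, lift_id, lift_id]
    exact mul_le_of_le hA hγ le_rfl
  have fresh : ∀ g, ∃ z : A, (e (g, z) : Z) ∉ B g := by
    intro g
    by_contra! h
    refine (hB g).not_ge ?_
    calc #A = #(range fun z : A => (e (g, z) : Z)) :=
          (mk_range_eq _ fun z w h => by simpa using e.injective (Subtype.ext h)).symm
      _ ≤ #(B g) := mk_le_mk_of_subset (range_subset_iff.2 h)
  choose z hz using fresh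
  exact ⟨fun g => e (g, z g), fun g g' h => congr_arg Prod.fst (e.injective (Subtype.ext h)),
    fun g => ⟨(e (g, z g)).2, hz g⟩⟩

theorem exists_surjective_of_mk_le {α β : Type u} [Nonempty β] (h : #β ≤ #α) :
    ∃ f : α → β, Surjective f :=
  let ⟨j⟩ := h
  ⟨invFun j, invFun_surjective j.injective⟩

theorem exists_isTopologicalBasis_mk_eq_tsWeight (X : Type u) [TopologicalSpace X] :
    ∃ B : Set (Set X), IsTopologicalBasis B ∧ #B = tsWeight X :=
  csInf_mem (s := { c | ∃ B : Set (Set X), IsTopologicalBasis B ∧ #B = c })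
    ⟨_, _, isTopologicalBasis_opens, rfl⟩

theorem exists_open_nonempty_family_of_tsWeight_le {X ι : Type u} [TopologicalSpace X]
    [Nonempty X] (h : tsWeight X ≤ #ι) :
    ∃ V : ι → Set X, (∀ i, IsOpen (V i) ∧ (V i).Nonempty) ∧
      ∀ s : Set X, (∀ i, (V i ∩ s).Nonempty) → Dense s := by
  obtain ⟨B, hB, hBw⟩ := exists_isTopologicalBasis_mk_eq_tsWeight X
  have : Nonempty {V ∈ B | V.Nonempty} :=
    let ⟨x⟩ := ‹Nonempty X›
    let ⟨V, hV, hxV, _⟩ := hB.exists_subset_of_mem_open (mem_univ x) isOpen_univ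
    ⟨V, hV, x, hxV⟩
  obtain ⟨V, hV⟩ := exists_surjective_of_mk_le (α := ι) (β := {V ∈ B | V.Nonempty})
    ((mk_le_mk_of_subset (sep_subset B _)).trans (hBw ▸ h))
  refine ⟨fun i => V i, fun i => ⟨hB.isOpen (V i).2.1, (V i).2.2⟩,
    fun s hs => hB.dense_iff.2 fun O hO hOne => ?_⟩
  obtain ⟨i, hi⟩ := hV ⟨O, hO, hOne⟩
  simpa [hi] using hs i

variable {𝕜}

theorem isSFG_iff_algebraicIndepOn {S : Set X} :
    IsSFG 𝕜 S ↔ AlgebraicIndepOn 𝕜 (Unitization.inr : X → Unitization 𝕜 X) S := by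
  refine ⟨fun hS => algebraicIndependent_iff.2 fun p hp => ?_, fun hS n x hxS hx P hP _ => ?_⟩
  · obtain ⟨n, v, hv, q, rfl⟩ := exists_fin_rename p
    rw [aeval_rename, comp_def] at hp
    by_contra hq
    refine hS n (fun i => v i) (fun i => (v i).2) (Subtype.val_injective.comp hv) q
      (fun h => hq (by rw [h, map_zero])) ?_ hp
    rw [← Unitization.fst_aeval_inr (fun i => (v i : X))]
    exact congr_arg (fun z : Unitization 𝕜 X => z.fst) hp
  · exact fun h => hP ((hS.comp (fun i => ⟨x i, hxS i⟩)
      fun i j hij => hx (congr_arg Subtype.val hij)).eq_zero_of_aeval_eq_zero P h)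

theorem AlgebraicIndependent.isSFG_range {ι : Type*} {f : ι → X}
    (hf : AlgebraicIndependent 𝕜 fun i => (f i : Unitization 𝕜 X)) : IsSFG 𝕜 (range f) :=
  isSFG_iff_algebraicIndepOn.2 <|
    (algebraicIndependent_equiv' (f := fun z : range f => (z : Unitization 𝕜 X))
      (Equiv.ofInjective f fun _ _ h => hf.injective (congr_arg Unitization.inr h)) rfl).1 hf

theorem IsSFG.mono {S T : Set X} (hT : IsSFG 𝕜 T) (hST : S ⊆ T) : IsSFG 𝕜 S :=
  fun n x hx => hT n x fun i => hST (hx i)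

theorem IsSFG.adjoin_inf_adjoin_eq_bot {U S T : Set X} (hU : IsSFG 𝕜 U) (hSU : S ⊆ U)
    (hTU : T ⊆ U) (hST : Disjoint S T) :
    NonUnitalAlgebra.adjoin 𝕜 S ⊓ NonUnitalAlgebra.adjoin 𝕜 T = ⊥ := by
  have image_eq : ∀ V ⊆ U, (fun u : U => (u : Unitization 𝕜 X)) '' (Subtype.val ⁻¹' V) =
      (↑) '' V := fun V hV => by
    rw [← image_image (g := Unitization.inr) (f := Subtype.val), Subtype.image_preimage_coe,
      inter_eq_right.2 hV]
  have hdisj := (isSFG_iff_algebraicIndepOn.1 hU).disjoint_adjoin_image (hST.preimage Subtype.val)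
  rw [image_eq S hSU, image_eq T hTU] at hdisj
  rw [eq_bot_iff]
  rintro z ⟨hzS, hzT⟩
  obtain ⟨c, hc⟩ := Algebra.mem_bot.1 <| hdisj.le_bot
    ⟨Unitization.inr_mem_adjoin_image hzS, Unitization.inr_mem_adjoin_image hzT⟩
  rw [NonUnitalAlgebra.mem_bot]
  simpa [Unitization.algebraMap_eq_inl, eq_comm] using
    congr_arg (fun w : Unitization 𝕜 X => w.snd) hc

theorem exists_algebraicIndependent_mem_open [TopologicalSpace X] [ContinuousAdd X]
    [ContinuousSMul 𝕜 X] {A : Set X} (hA : IsSFG 𝕜 A)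
    (hXfree : NonUnitalAlgebra.adjoin 𝕜 A = ⊤) {γ : Type} [LinearOrder γ] [WellFoundedLT γ]
    (hγ : (#γ).ord = typeLT γ) (hγA : #γ = #A) (hinf : ℵ₀ ≤ #A) {U : γ → Set X}
    (hU : ∀ g, IsOpen (U g)) (hUne : ∀ g, (U g).Nonempty) :
    ∃ f : γ → X, AlgebraicIndependent 𝕜 (fun g => (f g : Unitization 𝕜 X)) ∧ ∀ g, f g ∈ U g := by
  choose p hpU using hUne
  choose T hTA hTfin hpT using fun g =>
    NonUnitalAlgebra.exists_finite_subset_mem_adjoin (hXfree ▸ NonUnitalAlgebra.mem_top (x := p g))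
  obtain ⟨a, ha, haA⟩ := exists_injective_forall_mem_notMem hinf hγA.le
    (fun g => ⋃ g' ∈ Iic g, T g') fun g =>
      mk_biUnion_lt_of_finite hinf (hγA ▸ mk_Iic_lt g hγ (hγA ▸ hinf)) hTfin
  choose c hc hcU using fun g => exists_ne_zero_add_smul_mem (𝕜 := 𝕜) (hU g) (hpU g) (a g)
  refine ⟨fun g => p g + c g • a g, ?_, hcU⟩
  have hTfresh : ∀ g, T g ⊆ A \ a '' Ici g := fun g z hz =>
    ⟨hTA g hz, fun ⟨g', hg', hz'⟩ => (haA g').2 (mem_biUnion hg' (hz' ▸ hz))⟩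
  convert (isSFG_iff_algebraicIndepOn.1 hA).algebraicIndependent_smul_add (fun g => (haA g).1) ha
    hc (y := fun g => (p g : Unitization 𝕜 X))
    (fun g => Algebra.adjoin_mono (image_mono (hTfresh g))
      (Unitization.inr_mem_adjoin_image (hpT g)))
    using 2 with g
  rw [Unitization.inr_add, Unitization.inr_smul, add_comm]

/-- Let `X` be a commutative topological free algebra over `𝕜` which is
`α`-generated free (it has a set of free generators `A` with `|A| = α` and `X = ⟨A⟩`), with `α`
infinite and `w(X) ≤ α`.  Then there is a family `{Y_κ}_{κ<α}` of subalgebras `Y_κ = ⟨F_κ⟩` of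
`X` such that each `Y_κ` is an `α`-generated free dense subalgebra, and the family is
algebraically independent, i.e. `⋃ F_κ` is an SFG and the `F_κ` are pairwise disjoint (in
particular `Y_{κ₁} ∩ Y_{κ₂} = {0}` for `κ₁ ≠ κ₂`). -/
theorem stmt15 [TopologicalSpace X] [IsTopologicalRing X] [ContinuousSMul 𝕜 X]
    (A : Set X) (hA : IsSFG 𝕜 A)
    (hXfree : NonUnitalAlgebra.adjoin 𝕜 A = (⊤ : NonUnitalSubalgebra 𝕜 X))
    (α : Cardinal) (hcard : #↥A = α) (hinf : Cardinal.aleph0 ≤ α) (hw : tsWeight X ≤ α) :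
    ∃ (ι : Type) (F : ι → Set X), #ι = α ∧
      (∀ i, IsSFG 𝕜 (F i) ∧ #↥(F i) = α ∧
        Dense ((NonUnitalAlgebra.adjoin 𝕜 (F i) : NonUnitalSubalgebra 𝕜 X) : Set X)) ∧
      IsSFG 𝕜 (⋃ i, F i) ∧
      (∀ i j, i ≠ j → F i ∩ F j = ∅) ∧
      (∀ i j, i ≠ j →
        NonUnitalAlgebra.adjoin 𝕜 (F i) ⊓ NonUnitalAlgebra.adjoin 𝕜 (F j) =
          (⊥ : NonUnitalSubalgebra 𝕜 X)) := by
  subst hcard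
  obtain ⟨V, hV, hVdense⟩ := exists_open_nonempty_family_of_tsWeight_le (ι := A) hw
  obtain ⟨_, _, hord⟩ := exists_ord_eq_type_lt (A × A)
  obtain ⟨f, hf, hfV⟩ := exists_algebraicIndependent_mem_open hA hXfree hord
    (by rw [mk_prod, lift_id, mul_eq_self hinf]) hinf (U := fun p => V p.2)
    (fun p => (hV p.2).1) (fun p => (hV p.2).2)
  have hfinj : Injective f := fun _ _ h => hf.injective (congr_arg Unitization.inr h)
  set F : A → Set X := fun κ => range fun β => f (κ, β)
  have hFSFG : IsSFG 𝕜 (⋃ κ, F κ) :=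
    hf.isSFG_range.mono (iUnion_subset fun κ => range_comp_subset_range (Prod.mk κ) f)
  have hFdisj : ∀ i j, i ≠ j → F i ∩ F j = ∅ := fun i j hij =>
    eq_empty_of_forall_notMem fun _ ⟨⟨_, hβ⟩, ⟨_, hβ'⟩⟩ =>
      hij (congr_arg Prod.fst (hfinj (hβ.trans hβ'.symm)))
  refine ⟨A, F, rfl, fun κ => ⟨hFSFG.mono (subset_iUnion F κ), ?_, ?_⟩, hFSFG, hFdisj,
    fun i j hij => hFSFG.adjoin_inf_adjoin_eq_bot (subset_iUnion F i) (subset_iUnion F j)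
      (disjoint_iff_inter_eq_empty.2 (hFdisj i j hij))⟩
  · exact mk_range_eq _ (hfinj.comp (Prod.mk_right_injective κ))
  · exact (hVdense (F κ) fun β => ⟨f (κ, β), hfV (κ, β), β, rfl⟩).mono
      (NonUnitalAlgebra.subset_adjoin 𝕜)
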